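/- arXiv:1012.3483 — 5 statements merged into one kernel-verified Lean document; each statement's English description precedes it below -/
import Mathlib

section
/- Let K be a commutative ring, D a K-bialgebra with coproduct Δ_D and counit ε_D, and E a K-coalgebra with coproduct Δ_E and counit ε_E that is also a right D-module with K-bilinear action ⋆. Make E ⊗ E a right module over the K-algebra D ⊗ D componentwise: (x ⊗ y) ⋆ (d ⊗ d′) = (x ⋆ d) ⊗ (y ⋆ d′). Assume the module-coalgebra condition Δ_E(e ⋆ d) = Δ_E(e) ⋆ Δ_D(d) for all e ∈ E, d ∈ D, and that f : E → D is both a morphism of K-coalgebras ((f ⊗ f) ∘ Δ_E = Δ_D ∘ f and ε_D ∘ f = ε_E) and a morphism of right D-modules (f(e ⋆ d) = f(e)·d). Then the coproduct Δ_E is multiplicative for the product e · e′ := e ⋆ f(e′): for all e, e′ ∈ E, Δ_E(e · e′) = Δ_E(e) · Δ_E(e′), where the product on E ⊗ E is defined componentwise by (x ⊗ y)·(x′ ⊗ y′) = (x · x′) ⊗ (y · y′). -/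
open TensorProduct

/-- The componentwise extension of two bilinear maps to tensor products:
`pairMap g g' (a ⊗ a') (b ⊗ b') = (g a b) ⊗ (g' a' b')`. -/
noncomputable def pairMap {K : Type*} [CommRing K]
    {A A' B B' C C' : Type*}
    [AddCommGroup A] [Module K A] [AddCommGroup A'] [Module K A']
    [AddCommGroup B] [Module K B] [AddCommGroup B'] [Module K B']
    [AddCommGroup C] [Module K C] [AddCommGroup C'] [Module K C']
    (g : A →ₗ[K] B →ₗ[K] C) (g' : A' →ₗ[K] B' →ₗ[K] C') :
    A ⊗[K] A' →ₗ[K] B ⊗[K] B' →ₗ[K] C ⊗[K] C' :=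
  TensorProduct.lift (((TensorProduct.mapBilinear (σ₁₂ := RingHom.id K) (M := B) (N := B') (M₂ := C) (N₂ := C')).comp g).compl₂ g')

section pairMap

variable {K : Type*} [CommRing K] {A A' B B' C C' B₀ B₀' : Type*}
  [AddCommGroup A] [Module K A] [AddCommGroup A'] [Module K A']
  [AddCommGroup B] [Module K B] [AddCommGroup B'] [Module K B']
  [AddCommGroup C] [Module K C] [AddCommGroup C'] [Module K C']
  [AddCommGroup B₀] [Module K B₀] [AddCommGroup B₀'] [Module K B₀']
  (g : A →ₗ[K] B →ₗ[K] C) (g' : A' →ₗ[K] B' →ₗ[K] C')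

@[simp]
theorem pairMap_tmul_tmul (a : A) (a' : A') (b : B) (b' : B') :
    pairMap g g' (a ⊗ₜ a') (b ⊗ₜ b') = g a b ⊗ₜ g' a' b' := by
  simp [pairMap]

theorem pairMap_compl₂_map (f : B₀ →ₗ[K] B) (f' : B₀' →ₗ[K] B') :
    (pairMap g g').compl₂ (map f f') = pairMap (g.compl₂ f) (g'.compl₂ f') := by
  ext a a' b b'
  simp

end pairMap

theorem comul_multiplicative_for_connection_product_general
    {K D E : Type*} [CommRing K] [Ring D] [Bialgebra K D]
    [AddCommGroup E] [Module K E] [Coalgebra K E]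
    (star : E →ₗ[K] D →ₗ[K] E)
    (hmodcoalg : ∀ (e : E) (d : D),
      Coalgebra.comul (R := K) (star e d) =
        pairMap star star (Coalgebra.comul (R := K) e) (Coalgebra.comul (R := K) d))
    (f : E →ₗ[K] D)
    (hf_comul : TensorProduct.map f f ∘ₗ Coalgebra.comul (R := K) (A := E) =
        Coalgebra.comul (R := K) (A := D) ∘ₗ f) :
    ∀ e e' : E,
      Coalgebra.comul (R := K) (star e (f e')) =
        pairMap (star.compl₂ f) (star.compl₂ f)
          (Coalgebra.comul (R := K) e) (Coalgebra.comul (R := K) e') := by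
  intro e e'
  have hf_comul_apply : Coalgebra.comul (R := K) (f e') = map f f (Coalgebra.comul (R := K) e') :=
    (LinearMap.congr_fun hf_comul e').symm
  rw [hmodcoalg, hf_comul_apply, ← LinearMap.compl₂_apply, pairMap_compl₂_map]

/-- if `E` is a right `D`-module coalgebra over a bialgebra `D`
(`Δ_E (e ⋆ d) = Δ_E e ⋆ Δ_D d` componentwise) and `f : E → D` is a morphism of coalgebras
and of right `D`-modules, then the coproduct `Δ_E` is multiplicative for the product
`e · e' := e ⋆ f e'`, where `E ⊗ E` is given the componentwise product. -/
theorem comul_multiplicative_for_connection_product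
    {K D E : Type*} [CommRing K] [Ring D] [Bialgebra K D]
    [AddCommGroup E] [Module K E] [Coalgebra K E]
    (star : E →ₗ[K] D →ₗ[K] E)
    (hstar_mul : ∀ (e : E) (d d' : D), star e (d * d') = star (star e d) d')
    (hstar_one : ∀ e : E, star e 1 = e)
    (hmodcoalg : ∀ (e : E) (d : D),
      Coalgebra.comul (R := K) (star e d) =
        pairMap star star (Coalgebra.comul (R := K) e) (Coalgebra.comul (R := K) d))
    (f : E →ₗ[K] D)
    (hf_comul : TensorProduct.map f f ∘ₗ Coalgebra.comul (R := K) (A := E) =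
        Coalgebra.comul (R := K) (A := D) ∘ₗ f)
    (hf_counit : Coalgebra.counit (R := K) (A := D) ∘ₗ f =
        Coalgebra.counit (R := K) (A := E))
    (hf_mod : ∀ (e : E) (d : D), f (star e d) = f e * d) :
    ∀ e e' : E,
      Coalgebra.comul (R := K) (star e (f e')) =
        pairMap (star.compl₂ f) (star.compl₂ f)
          (Coalgebra.comul (R := K) e) (Coalgebra.comul (R := K) e') :=
  comul_multiplicative_for_connection_product_general star hmodcoalg f hf_comul
end

section
/- Let C : ℕ → ℕ be a sequence with C(0) = 1, and define E : ℕ → ℕ by E(n) = Σ_{k=0}^{n} Σ_{γ} Π_{i=0}^{k} C(γ_i), where the inner sum is over all weak compositions γ = (γ_0, …, γ_k) of n − k into k + 1 nonnegative parts (i.e. γ : Fin(k+1) → ℕ with Σ_i γ_i = n − k). Then E(0) = 1 and, for every n ≥ 1, E(n) = C(n) + Σ_{i=0}^{n-1} C(i)·E(n−1−i). -/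
/-!
Peel off the first part `γ₀ = i` of each weak composition. The terms with `k = 0` contribute
`C n`; for `k ≥ 1`, the remaining `k` parts, together with one degree fewer on the comb, run
exactly through the terms of `E (n - 1 - i)`, weighted by `C i`. Written with antidiagonals
`k + m = n`, this is a reassociation of triple sums over `a + b + d = n`.
-/

open Finset

namespace Finset.Nat

theorem sum_antidiagonalTuple_succ {M : Type*} [AddCommMonoid M] (k n : ℕ)
    (f : (Fin (k + 1) → ℕ) → M) :
    ∑ γ ∈ antidiagonalTuple (k + 1) n, f γ =
      ∑ p ∈ antidiagonal n, ∑ δ ∈ antidiagonalTuple k p.2, f (Fin.cons p.1 δ) := by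
  -- `antidiagonalTuple (k + 1) n` is defined on lists by exactly this recursion.
  change ((List.Nat.antidiagonalTuple (k + 1) n).map f).sum =
    ((List.Nat.antidiagonal n).map fun p =>
      ((List.Nat.antidiagonalTuple k p.2).map fun δ => f (Fin.cons p.1 δ)).sum).sum
  rw [List.Nat.antidiagonalTuple, List.map_flatMap, List.flatMap, List.sum_flatten, List.map_map]
  simp only [Function.comp_def, List.map_map]

theorem sum_antidiagonal_antidiagonal_snd_swap {M : Type*} [AddCommMonoid M] (n : ℕ)
    (f : ℕ → ℕ → ℕ → M) :
    ∑ p ∈ antidiagonal n, ∑ q ∈ antidiagonal p.2, f p.1 q.1 q.2 =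
      ∑ q ∈ antidiagonal n, ∑ p ∈ antidiagonal q.2, f p.1 q.1 p.2 := by
  rw [sum_sigma', sum_sigma']
  refine sum_nbij' (fun x => ⟨(x.2.1, x.1.1 + x.2.2), (x.1.1, x.2.2)⟩)
    (fun x => ⟨(x.2.1, x.1.1 + x.2.2), (x.1.1, x.2.2)⟩) ?_ ?_ ?_ ?_ ?_ <;>
  · rintro ⟨⟨a, b⟩, ⟨c, d⟩⟩
    simp only [mem_sigma, HasAntidiagonal.mem_antidiagonal]
    grind

end Finset.Nat

section WeakCompositions

variable {R : Type*} [CommSemiring R] (c : ℕ → R)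

def weakCompositionSum (k n : ℕ) : R :=
  ∑ γ ∈ Nat.antidiagonalTuple k n, ∏ i, c (γ i)

theorem weakCompositionSum_one (n : ℕ) : weakCompositionSum c 1 n = c n := by
  simp [weakCompositionSum, Nat.antidiagonalTuple_one]

theorem weakCompositionSum_succ (k n : ℕ) :
    weakCompositionSum c (k + 1) n =
      ∑ p ∈ antidiagonal n, c p.1 * weakCompositionSum c k p.2 := by
  simp only [weakCompositionSum, Nat.sum_antidiagonalTuple_succ, Fin.prod_univ_succ,
    Fin.cons_zero, Fin.cons_succ, mul_sum]

/-- `E(n)`, with `k` the degree of the comb in `𝒟_k` and `m` the degree shared by the `k + 1`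
factors of `𝒞`. -/
def combCompositionDim (n : ℕ) : R :=
  ∑ p ∈ antidiagonal n, weakCompositionSum c (p.1 + 1) p.2

theorem combCompositionDim_zero : combCompositionDim c 0 = c 0 := by
  simp [combCompositionDim, weakCompositionSum_one]

theorem combCompositionDim_succ (n : ℕ) :
    combCompositionDim c (n + 1) =
      c (n + 1) + ∑ p ∈ antidiagonal n, c p.1 * combCompositionDim c p.2 := by
  simp only [combCompositionDim, Nat.sum_antidiagonal_succ, weakCompositionSum_one,
    weakCompositionSum_succ c (_ + 1), mul_sum, zero_add]
  rw [Nat.sum_antidiagonal_antidiagonal_snd_swap n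
    fun a b d => c b * weakCompositionSum c (a + 1) d]

end WeakCompositions

/-- if `C 0 = 1` and
`E n = Σ_{k=0}^{n} Σ_{γ ⊨ n-k into k+1 parts} Π_i C (γ i)` (dimensions of a composition
over a comb coalgebra), then `E 0 = 1` and `E n = C n + Σ_{i=0}^{n-1} C i * E (n-1-i)`
for `n ≥ 1`. -/
theorem comb_composition_recursion
    (C : ℕ → ℕ) (hC : C 0 = 1)
    (E : ℕ → ℕ)
    (hE : ∀ n, E n = ∑ k ∈ Finset.range (n + 1),
      ∑ γ ∈ Finset.Nat.antidiagonalTuple (k + 1) (n - k), ∏ i, C (γ i)) :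
    E 0 = 1 ∧ ∀ n, 1 ≤ n → E n = C n + ∑ i ∈ Finset.range n, C i * E (n - 1 - i) := by
  have hE_dim : E = combCompositionDim C := funext fun n => by
    rw [hE, combCompositionDim, Nat.sum_antidiagonal_eq_sum_range_succ
      (fun k m => weakCompositionSum C (k + 1) m)]
    rfl
  subst hE_dim
  refine ⟨by rw [combCompositionDim_zero, hC], fun n hn => ?_⟩
  obtain ⟨m, rfl⟩ := Nat.exists_eq_add_of_le' hn
  rw [combCompositionDim_succ, Nat.sum_antidiagonal_eq_sum_range_succ
    (fun i j => C i * combCompositionDim C j)]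
  simp
end

section
/- Let C : ℕ → ℕ be a sequence with C(0) = 1, and define E : ℕ → ℕ by E(n) = Σ_{k=0}^{n} catalan(k) · Σ_{γ} Π_{i=0}^{k} C(γ_i), where catalan(k) is the k-th Catalan number and the inner sum is over all weak compositions γ = (γ_0, …, γ_k) of n − k into k + 1 nonnegative parts (i.e. γ : Fin(k+1) → ℕ with Σ_i γ_i = n − k). Then E(0) = 1 and, for every n ≥ 1, E(n) = C(n) + Σ_{i=0}^{n-1} E(i)·E(n−1−i). -/
/-! With `c = ∑ C n Xⁿ` and `T` the Catalan series, the `k`-th summand of `E n` is `catalan k`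
times the coefficient of `X^(n-k)` in `c^(k+1)`, so `F = ∑ E n Xⁿ` is `c · T(X c)`.
Substituting `X c` into `T = 1 + X T²` and multiplying by `c` gives `F = c + X F²`, whose
coefficients are the recursion. -/

open Finset

namespace PowerSeries

theorem coeff_pow_eq_sum_antidiagonalTuple {R : Type*} [CommSemiring R]
    (φ : PowerSeries R) (k n : ℕ) :
    coeff n (φ ^ k) = ∑ γ ∈ Nat.antidiagonalTuple k n, ∏ i, coeff (γ i) φ := by
  classical
  rw [← Fin.prod_const, coeff_prod, ← piAntidiag_univ_fin_eq_antidiagonalTuple,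
    finsuppAntidiag, sum_map, ← sum_attach (piAntidiag _ _)]
  rfl

theorem coeff_succ_of_eq_add_X_mul_sq {R : Type*} [Semiring R] {F g : PowerSeries R}
    (hF : F = g + X * F ^ 2) (n : ℕ) :
    coeff (n + 1) F = coeff (n + 1) g + ∑ i ∈ range (n + 1), coeff i F * coeff (n - i) F := by
  conv_lhs => rw [hF]
  rw [map_add, coeff_succ_X_mul, sq, coeff_mul, Nat.sum_antidiagonal_eq_sum_range_succ_mk]

section CommRing

variable {R : Type*} [CommRing R]

theorem hasSubst_X_mul (g : PowerSeries R) : HasSubst (X * g) :=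
  HasSubst.of_constantCoeff_zero' (by simp)

theorem coeff_subst_X_mul (f g : PowerSeries R) (n : ℕ) :
    coeff n (f.subst (X * g)) = ∑ k ∈ range (n + 1), coeff k f * coeff (n - k) (g ^ k) := by
  rw [coeff_subst' (hasSubst_X_mul g), finsum_eq_sum_of_support_subset (s := range (n + 1))]
  · refine sum_congr rfl fun k hk => ?_
    rw [mul_pow, coeff_X_pow_mul', if_pos (Nat.lt_succ_iff.mp (mem_range.mp hk)), smul_eq_mul]
  · intro k hk
    by_contra hkn
    rw [coe_range, Set.mem_Iio, not_lt] at hkn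
    rw [Function.mem_support, mul_pow, coeff_X_pow_mul', if_neg (by omega), smul_zero] at hk
    exact hk rfl

theorem coeff_mul_subst_X_mul (f g : PowerSeries R) (n : ℕ) :
    coeff n (g * f.subst (X * g)) =
      ∑ k ∈ range (n + 1), coeff k f * coeff (n - k) (g ^ (k + 1)) := by
  have hshift : X * (g * f.subst (X * g)) = (X * f).subst (X * g) := by
    rw [subst_mul (hasSubst_X_mul g), subst_X (hasSubst_X_mul g)]
    ring
  have hcoeff := congrArg (coeff (n + 1)) hshift
  rw [coeff_succ_X_mul, coeff_subst_X_mul, sum_range_succ'] at hcoeff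
  simpa [coeff_succ_X_mul, pow_succ] using hcoeff

theorem mul_subst_X_mul_eq_add_X_mul_sq {T : PowerSeries R} (hT : T ^ 2 * X + 1 = T)
    (g : PowerSeries R) :
    g * T.subst (X * g) = g + X * (g * T.subst (X * g)) ^ 2 := by
  have hS := congrArg (substAlgHom (R := R) (hasSubst_X_mul g)) hT
  rw [map_add, map_mul, map_pow, map_one, substAlgHom_X, coe_substAlgHom] at hS
  linear_combination (-g) * hS

end CommRing

end PowerSeries

open PowerSeries in
/-- if `C 0 = 1` and
`E n = Σ_{k=0}^{n} catalan k * Σ_{γ ⊨ n-k into k+1 parts} Π_i C (γ i)` (dimensions of a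
composition over the binary-tree coalgebra), then `E 0 = 1` and
`E n = C n + Σ_{i=0}^{n-1} E i * E (n-1-i)` for `n ≥ 1`. -/
theorem tree_composition_recursion
    (C : ℕ → ℕ) (hC : C 0 = 1)
    (E : ℕ → ℕ)
    (hE : ∀ n, E n = ∑ k ∈ Finset.range (n + 1), catalan k *
      ∑ γ ∈ Finset.Nat.antidiagonalTuple (k + 1) (n - k), ∏ i, C (γ i)) :
    E 0 = 1 ∧ ∀ n, 1 ≤ n → E n = C n + ∑ i ∈ Finset.range n, E i * E (n - 1 - i) := by
  refine ⟨by simp [hE, hC], fun n hn => ?_⟩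
  obtain ⟨m, rfl⟩ : ∃ m, n = m + 1 := ⟨n - 1, by omega⟩
  -- Substitution of power series needs a commutative ring, so we compute over `ℤ`.
  let c : PowerSeries ℤ := mk fun n => (C n : ℤ)
  let T : PowerSeries ℤ := map (Nat.castRingHom ℤ) catalanSeries
  have hT : T ^ 2 * X + 1 = T := by
    simpa [T] using congrArg (map (Nat.castRingHom ℤ)) catalanSeries_sq_mul_X_add_one
  have hcoeff : ∀ n, coeff n (c * T.subst (X * c)) = (E n : ℤ) := by
    intro n
    rw [coeff_mul_subst_X_mul, hE]
    push_cast
    simp [coeff_pow_eq_sum_antidiagonalTuple, T, c]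
  have hrec := coeff_succ_of_eq_add_X_mul_sq (mul_subst_X_mul_eq_add_X_mul_sq hT c) m
  simp only [hcoeff, c, coeff_mk] at hrec
  simp only [add_tsub_cancel_right]
  exact_mod_cast hrec
end

section
/- Let e : ℕ → ℕ satisfy e(0) = 1 and, for all n ≥ 1, e(n) = 1 + Σ_{i=0}^{n-1} e(i)·e(n−1−i). Then for all n, e(n) = Σ_{k=0}^{n} binom(n,k)·catalan(k), the binomial transform of the Catalan numbers. -/
/-!
With `t = binomialTransform catalan`, expand `t i * t j` and sum over `i + j = m`: the upper
Chu–Vandermonde identity `∑_{i+j=m} C(i,a) C(j,c) = C(m+1, a+c+1)` collapses the sum over `(i, j)`,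
leaving `∑_k C(m+1, k+1) ∑_{a+c=k} catalan a * catalan c = ∑_k C(m+1, k+1) catalan (k+1)`,
which is `t (m+1) - 1`. So `t` obeys the recursion of `e`, and strong induction concludes.
-/

open Finset

theorem Nat.sum_antidiagonal_choose_mul_choose (m a b : ℕ) :
    ∑ p ∈ antidiagonal m, p.1.choose a * p.2.choose b = (m + 1).choose (a + b + 1) := by
  induction m generalizing b with
  | zero => cases a <;> cases b <;> simp [eq_comm (a := 0), Nat.choose_eq_zero_iff]
  | succ m ih =>
    rw [Nat.sum_antidiagonal_succ']
    cases b with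
    | zero =>
      have ih0 := ih 0
      simp only [Nat.choose_zero_right, mul_one, add_zero] at ih0 ⊢
      rw [ih0, Nat.choose_succ_succ' (m + 1) a]
    | succ b =>
      simp only [Nat.choose_succ_succ' _ b, Nat.choose_zero_succ, mul_zero, zero_add, mul_add,
        sum_add_distrib, ih]
      rw [Nat.choose_succ_succ' (m + 1)]
      rfl

theorem Finset.sum_range_sum_range_eq_sum_range_sum_antidiagonal {M : Type*} [AddCommMonoid M]
    (N : ℕ) (g : ℕ → ℕ → M) (hg : ∀ a c, N ≤ a + c → g a c = 0) :
    ∑ a ∈ range N, ∑ c ∈ range N, g a c = ∑ k ∈ range N, ∑ p ∈ antidiagonal k, g p.1 p.2 := by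
  rw [← sum_product', ← sum_filter_of_ne (p := fun p ↦ p.1 + p.2 < N)
    fun p _ hp ↦ not_le.mp fun h ↦ hp (hg p.1 p.2 h),
    ← sum_fiberwise_of_maps_to (g := fun p ↦ p.1 + p.2) (t := range N) (by simp)]
  refine sum_congr rfl fun k hk ↦ sum_congr ?_ fun _ _ ↦ rfl
  ext p
  simp only [mem_range] at hk
  simp only [mem_filter, mem_product, mem_range, HasAntidiagonal.mem_antidiagonal]
  omega

def binomialTransform {M : Type*} [AddCommMonoid M] (f : ℕ → M) (n : ℕ) : M :=
  ∑ k ∈ range (n + 1), n.choose k • f k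

section BinomialTransform

variable {M : Type*} [AddCommMonoid M] (f : ℕ → M)

theorem binomialTransform_eq_sum_range {n N : ℕ} (h : n < N) :
    binomialTransform f n = ∑ k ∈ range N, n.choose k • f k :=
  sum_subset (range_subset_range.mpr h) fun k _ hk ↦ by
    rw [Nat.choose_eq_zero_of_lt (by simpa using hk), zero_smul]

theorem binomialTransform_succ (n : ℕ) :
    binomialTransform f (n + 1) =
      f 0 + ∑ k ∈ range (n + 1), (n + 1).choose (k + 1) • f (k + 1) := by
  rw [binomialTransform, sum_range_succ', Nat.choose_zero_right, one_smul, add_comm]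

end BinomialTransform

theorem sum_antidiagonal_binomialTransform_mul {R : Type*} [Semiring R] (f g : ℕ → R) (m : ℕ) :
    ∑ p ∈ antidiagonal m, binomialTransform f p.1 * binomialTransform g p.2 =
      ∑ k ∈ range (m + 1), (m + 1).choose (k + 1) • ∑ q ∈ antidiagonal k, f q.1 * g q.2 := by
  have expand : ∀ p ∈ antidiagonal m, binomialTransform f p.1 * binomialTransform g p.2 =
      ∑ a ∈ range (m + 1), ∑ c ∈ range (m + 1), (p.1.choose a * p.2.choose c) • (f a * g c) := by
    intro p hp
    rw [binomialTransform_eq_sum_range f (Nat.antidiagonal.fst_lt hp),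
      binomialTransform_eq_sum_range g (Nat.antidiagonal.snd_lt hp), sum_mul_sum]
    simp only [smul_mul_smul_comm]
  calc _ = ∑ a ∈ range (m + 1), ∑ c ∈ range (m + 1), (m + 1).choose (a + c + 1) • (f a * g c) := by
        rw [sum_congr rfl expand, sum_comm]
        refine sum_congr rfl fun a _ ↦ ?_
        rw [sum_comm]
        simp only [← sum_smul, Nat.sum_antidiagonal_choose_mul_choose]
    _ = _ := by
        rw [sum_range_sum_range_eq_sum_range_sum_antidiagonal _ _ fun a c h ↦ by
          rw [Nat.choose_eq_zero_of_lt (by omega), zero_smul]]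
        refine sum_congr rfl fun k _ ↦ ?_
        rw [smul_sum]
        exact sum_congr rfl fun q hq ↦ by rw [mem_antidiagonal.mp hq]

theorem binomialTransform_catalan_succ (m : ℕ) :
    binomialTransform catalan (m + 1) =
      1 + ∑ p ∈ antidiagonal m, binomialTransform catalan p.1 * binomialTransform catalan p.2 := by
  rw [sum_antidiagonal_binomialTransform_mul, binomialTransform_succ, catalan_zero]
  simp only [catalan_succ']

/-- if `e 0 = 1` and `e n = 1 + Σ_{i=0}^{n-1} e i * e (n-1-i)` for all
`n ≥ 1`, then `e n = Σ_{k=0}^{n} binom(n,k) * catalan k`, the binomial transform of the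
Catalan numbers (combs over a tree). -/
theorem combs_over_tree_eq_binomial_transform_catalan
    (e : ℕ → ℕ) (h0 : e 0 = 1)
    (h : ∀ n, 1 ≤ n → e n = 1 + ∑ i ∈ Finset.range n, e i * e (n - 1 - i)) :
    ∀ n, e n = ∑ k ∈ Finset.range (n + 1), n.choose k * catalan k := by
  suffices ∀ n, e n = binomialTransform catalan n by simpa [binomialTransform] using this
  intro n
  induction n using Nat.strong_induction_on with | _ n ih =>
  cases n with
  | zero => simpa [binomialTransform] using h0
  | succ m =>
    rw [h (m + 1) m.succ_pos, Nat.add_sub_cancel, binomialTransform_catalan_succ,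
      ← Nat.sum_antidiagonal_eq_sum_range_succ fun i j ↦ e i * e j]
    refine congrArg (1 + ·) (sum_congr rfl fun p hp ↦ ?_)
    rw [ih p.1 (Nat.antidiagonal.fst_lt hp), ih p.2 (Nat.antidiagonal.snd_lt hp)]
end

section
/- Let e : ℕ → ℤ satisfy e(0) = 1 and, for all n ≥ 1, e(n) = n! + Σ_{i=0}^{n-1} i!·e(n−1−i). Let F ∈ ℤ⟦X⟧ be the formal power series with coefficients F_n = n!, and let E ∈ ℤ⟦X⟧ have coefficients E_n = e(n). Then E·(1 − X·F) = F; equivalently, E is the invert transform of the factorial numbers. -/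
/-- if `e 0 = 1` and `e n = n! + Σ_{i=0}^{n-1} i! * e (n-1-i)` for `n ≥ 1`,
then the power series `E = Σ e n * X^n` and `F = Σ n! * X^n` satisfy `E * (1 - X * F) = F`;
that is, `E` is the invert transform of the factorial numbers (permutations over a comb). -/
theorem permutations_over_comb_invert_transform
    (e : ℕ → ℤ) (h0 : e 0 = 1)
    (h : ∀ n, 1 ≤ n → e n = (n.factorial : ℤ) +
      ∑ i ∈ Finset.range n, (i.factorial : ℤ) * e (n - 1 - i)) :
    PowerSeries.mk e *
        (1 - PowerSeries.X * PowerSeries.mk (fun n => (n.factorial : ℤ))) =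
      PowerSeries.mk (fun n => (n.factorial : ℤ)) := by
  have key : PowerSeries.mk e * (PowerSeries.X * PowerSeries.mk (fun n => (n.factorial : ℤ)))
      = PowerSeries.X * (PowerSeries.mk e * PowerSeries.mk (fun n => (n.factorial : ℤ))) := by
    ring
  rw [mul_sub, mul_one, key]
  ext n
  rw [map_sub]
  cases n with
  | zero =>
      simp [PowerSeries.coeff_mk, h0]
  | succ n =>
      rw [PowerSeries.coeff_succ_X_mul, PowerSeries.coeff_mul]
      rw [Finset.Nat.sum_antidiagonal_eq_sum_range_succ_mk]
      simp only [PowerSeries.coeff_mk]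
      rw [h (n + 1) (Nat.le_add_left 1 n)]
      have : ∑ i ∈ Finset.range (n + 1), ((i.factorial : ℤ)) * e (n + 1 - 1 - i)
          = ∑ k ∈ Finset.range (n + 1), e k * ((n - k).factorial : ℤ) := by
        rw [← Finset.sum_range_reflect (fun k => e k * ((n - k).factorial : ℤ)) (n + 1)]
        apply Finset.sum_congr rfl
        intro k hk
        rw [Finset.mem_range] at hk
        have h1 : n + 1 - 1 - k = n - k := by omega
        have h2 : n - (n - k) = k := by omega
        rw [h1, h2, mul_comm]
      rw [this]
      ring
end
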